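/- arXiv:1710.01374 — 3 statements merged into one kernel-verified Lean document; each statement's English description precedes it below -/
import Mathlib

section
/- Let χ : [n] → {•, ∘} with χ(1) = χ(n) = ∘, and let l1 be the second-smallest element of χ^{-1}(∘). If π ∈ INC(χ) and V is the block of π containing l1, then the restriction of π to {1,...,l1} consists exactly of the blocks of π entirely contained in {1,...,l1-1} together with the set W = {t ∈ V : t ≤ l1}; in particular every block of π either lies entirely in {1,...,l1-1}, lies entirely in {l1+1,...,n}, or contains l1. -/
open scoped Classical

section Defs

variable {α : Type*}

/-- `P` is a partition of the finite set `S`: blocks are nonempty subsets of `S`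
and every element of `S` lies in a unique block. -/
def IsPartitionOn (S : Finset α) (P : Finset (Finset α)) : Prop :=
  (∀ B ∈ P, B.Nonempty ∧ B ⊆ S) ∧ ∀ x ∈ S, ∃! B, B ∈ P ∧ x ∈ B

/-- `P` is noncrossing: no `s₁ < r₁ < s₂ < r₂` with `s₁, s₂` in one block and
`r₁, r₂` in a different block. -/
def Noncrossing [LinearOrder α] (P : Finset (Finset α)) : Prop :=
  ∀ V ∈ P, ∀ W ∈ P, V ≠ W →
    ¬ ∃ s₁ r₁ s₂ r₂, s₁ ∈ V ∧ s₂ ∈ V ∧ r₁ ∈ W ∧ r₂ ∈ W ∧ s₁ < r₁ ∧ r₁ < s₂ ∧ s₂ < r₂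

/-- A block `V` is inner if some other block `W` has elements `s, t` with
`s < v < t` for all `v ∈ V`. -/
def IsInnerBlock [LinearOrder α] (P : Finset (Finset α)) (V : Finset α) : Prop :=
  ∃ W ∈ P, W ≠ V ∧ ∃ s ∈ W, ∃ t ∈ W, ∀ v ∈ V, s < v ∧ v < t

/-- `P` is an interval partition: no `s₁ < r < s₂` with `s₁, s₂` in one block
and `r` in a different block. -/
def IsIntervalPartition [LinearOrder α] (P : Finset (Finset α)) : Prop :=
  ∀ V ∈ P, ∀ W ∈ P, V ≠ W →
    ¬ ∃ s₁ r s₂, s₁ ∈ V ∧ s₂ ∈ V ∧ r ∈ W ∧ s₁ < r ∧ r < s₂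

/-- Reversed refinement order: every block of `P` is contained in a block of `Q`. -/
def Refines (P Q : Finset (Finset α)) : Prop := ∀ B ∈ P, ∃ C ∈ Q, B ⊆ C

/-- Noncrossing partition of the finite ordered set `S`. -/
def NCOn [LinearOrder α] (S : Finset α) (P : Finset (Finset α)) : Prop :=
  IsPartitionOn S P ∧ Noncrossing P

/-- Interval-noncrossing partition of `S` w.r.t. the coloring `χ`
(`χ k = true` means `k` is colored `∘`): a noncrossing partition such that
no `∘`-colored element lies in an inner block. -/
def INCOn [LinearOrder α] (S : Finset α) (χ : α → Bool) (P : Finset (Finset α)) : Prop :=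
  IsPartitionOn S P ∧ Noncrossing P ∧
    ∀ V ∈ P, IsInnerBlock P V → ∀ k ∈ V, χ k = false

/-- Restriction of a partition to a subset: nonempty intersections of blocks with `A`. -/
def restrictPart [DecidableEq α] (P : Finset (Finset α)) (A : Finset α) : Finset (Finset α) :=
  (P.image (· ∩ A)).filter (·.Nonempty)

end Defs


/-!
Since `l₁` is colored `∘`, the block `V` containing it is not inner. A block `B` not containing
`l₁` but having elements `x < l₁ < y` would make `V` inner: by noncrossingness every element of
`V` lies strictly between `x` and `y`. So each block lies entirely below `l₁`, entirely above
`l₁`, or is `V`; intersecting with `{t ≤ l₁}` keeps the first kind, kills the second and cuts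
`V` down to `V ∩ Iic l₁`.
-/

variable {α : Type*}

theorem IsPartitionOn.eq_of_mem {S : Finset α} {P : Finset (Finset α)} (hP : IsPartitionOn S P)
    {x : α} (hx : x ∈ S) {B C : Finset α} (hB : B ∈ P) (hC : C ∈ P) (hxB : x ∈ B)
    (hxC : x ∈ C) : B = C :=
  (hP.2 x hx).unique ⟨hB, hxB⟩ ⟨hC, hxC⟩

section LinearOrder

variable [LinearOrder α]

theorem Noncrossing.isInnerBlock_of_lt_of_lt {S : Finset α} {P : Finset (Finset α)}
    (hP : IsPartitionOn S P) (hnc : Noncrossing P) {a : α} {V B : Finset α} (hV : V ∈ P)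
    (haV : a ∈ V) (hB : B ∈ P) (haB : a ∉ B) {x y : α} (hxB : x ∈ B) (hyB : y ∈ B)
    (hxa : x < a) (hay : a < y) : IsInnerBlock P V := by
  have hBV : B ≠ V := fun h => haB (h ▸ haV)
  have hne : ∀ v ∈ V, ∀ z ∈ B, v ≠ z := by
    rintro v hv z hz rfl
    exact hBV (hP.eq_of_mem ((hP.1 B hB).2 hz) hB hV hz hv)
  refine ⟨B, hB, hBV, x, hxB, y, hyB, fun v hv => ⟨?_, ?_⟩⟩
  · by_contra! h
    exact hnc V hV B hB hBV.symm
      ⟨v, x, a, y, hv, haV, hxB, hyB, h.lt_of_ne (hne v hv x hxB), hxa, hay⟩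
  · by_contra! h
    exact hnc B hB V hV hBV
      ⟨x, a, y, v, hxB, hyB, haV, hv, hxa, hay, h.lt_of_ne' (hne v hv y hyB)⟩

theorem INCOn.lt_or_gt_or_mem {S : Finset α} {χ : α → Bool} {P : Finset (Finset α)}
    (hP : INCOn S χ P) {a : α} (ha : χ a = true) {V : Finset α} (hV : V ∈ P) (haV : a ∈ V)
    {B : Finset α} (hB : B ∈ P) : (∀ x ∈ B, x < a) ∨ (∀ x ∈ B, a < x) ∨ a ∈ B := by
  by_cases haB : a ∈ B
  · exact Or.inr (Or.inr haB)
  have hne : ∀ x ∈ B, x ≠ a := fun x hx h => haB (h ▸ hx)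
  by_contra! h
  obtain ⟨⟨y, hyB, hay⟩, ⟨x, hxB, hxa⟩, -⟩ := h
  have hinner := hP.2.1.isInnerBlock_of_lt_of_lt hP.1 hV haV hB haB hxB hyB
    (hxa.lt_of_ne (hne x hxB)) (hay.lt_of_ne' (hne y hyB))
  simp [hP.2.2 V hV hinner a haV] at ha

theorem IsPartitionOn.restrictPart_Iic [LocallyFiniteOrderBot α] {S : Finset α}
    {P : Finset (Finset α)} (hP : IsPartitionOn S P) {a : α} (ha : a ∈ S) {V : Finset α}
    (hV : V ∈ P) (haV : a ∈ V)
    (htri : ∀ B ∈ P, (∀ x ∈ B, x < a) ∨ (∀ x ∈ B, a < x) ∨ a ∈ B) :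
    restrictPart P (Finset.Iic a) = P.filter (fun B => ∀ x ∈ B, x < a) ∪ {V ∩ Finset.Iic a} := by
  have inter_of_lt : ∀ B : Finset α, (∀ x ∈ B, x < a) → B ∩ Finset.Iic a = B := fun B hB =>
    Finset.inter_eq_left.mpr fun x hx => Finset.mem_Iic.mpr (hB x hx).le
  ext C
  simp only [restrictPart, Finset.mem_filter, Finset.mem_image, Finset.mem_union,
    Finset.mem_singleton]
  constructor
  · rintro ⟨⟨B, hB, rfl⟩, x, hx⟩
    rw [Finset.mem_inter, Finset.mem_Iic] at hx
    rcases htri B hB with hlt | hgt | haB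
    · exact Or.inl (by rw [inter_of_lt B hlt]; exact ⟨hB, hlt⟩)
    · exact absurd hx.2 (hgt x hx.1).not_ge
    · exact Or.inr (by rw [hP.eq_of_mem ha hB hV haB haV])
  · rintro (⟨hC, hlt⟩ | rfl)
    · exact ⟨⟨C, hC, inter_of_lt C hlt⟩, (hP.1 C hC).1⟩
    · exact ⟨⟨V, hV, rfl⟩, a, Finset.mem_inter.mpr ⟨haV, Finset.mem_Iic.mpr le_rfl⟩⟩

end LinearOrder

theorem restriction_at_second_circ_general {n : ℕ} (χ : Fin n → Bool)
    (l₁ : Fin n) (hl₁ : χ l₁ = true)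
    (π : Finset (Finset (Fin n))) (hπ : INCOn Finset.univ χ π)
    (V : Finset (Fin n)) (hV : V ∈ π) (hl₁V : l₁ ∈ V) :
    restrictPart π (Finset.Iic l₁) =
      (π.filter (fun B => ∀ x ∈ B, x < l₁)) ∪ {V ∩ Finset.Iic l₁} ∧
    ∀ B ∈ π, (∀ x ∈ B, x < l₁) ∨ (∀ x ∈ B, l₁ < x) ∨ l₁ ∈ B := by
  have htri : ∀ B ∈ π, (∀ x ∈ B, x < l₁) ∨ (∀ x ∈ B, l₁ < x) ∨ l₁ ∈ B :=
    fun B hB => hπ.lt_or_gt_or_mem hl₁ hV hl₁V hB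
  refine ⟨?_, htri⟩
  -- `convert` reconciles the decidability instances of `Fin n` with those coming from `LinearOrder`.
  convert hπ.1.restrictPart_Iic (Finset.mem_univ l₁) hV hl₁V htri

/-- for π ∈ INC(χ) with χ(1) = χ(n) = ∘ and l₁ the second smallest
∘-colored element, the restriction of π to {1,...,l₁} consists of the blocks of π
contained in {1,...,l₁-1} together with W = {t ∈ V : t ≤ l₁}, where V is the block
containing l₁; in particular every block of π lies below l₁, lies above l₁, or
contains l₁. -/
theorem restriction_at_second_circ {n : ℕ} (hn : 0 < n) (χ : Fin n → Bool)
    (hχ1 : χ ⟨0, hn⟩ = true) (hχn : χ ⟨n - 1, Nat.sub_lt hn one_pos⟩ = true)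
    (l₁ : Fin n) (hl₁pos : 0 < l₁.val) (hl₁ : χ l₁ = true)
    (hsecond : ∀ k : Fin n, 0 < k.val → k < l₁ → χ k = false)
    (π : Finset (Finset (Fin n))) (hπ : INCOn Finset.univ χ π)
    (V : Finset (Fin n)) (hV : V ∈ π) (hl₁V : l₁ ∈ V) :
    restrictPart π (Finset.Iic l₁) =
      (π.filter (fun B => ∀ x ∈ B, x < l₁)) ∪ {V ∩ Finset.Iic l₁} ∧
    ∀ B ∈ π, (∀ x ∈ B, x < l₁) ∨ (∀ x ∈ B, l₁ < x) ∨ l₁ ∈ B :=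
  restriction_at_second_circ_general χ l₁ hl₁ π hπ V hV hl₁V
end

section
/- For every coloring χ : [n] → {•, ∘}, the set INC(χ) of interval-noncrossing partitions, partially ordered by reversed refinement, is a lattice. -/
open scoped Classical

/-! The meet of two interval-noncrossing partitions is their common refinement: an inner block
`A ∩ B` of it, nested inside `A' ∩ B'`, forces `A` to be nested inside `A'` (if `A ≠ A'`) or `B`
inside `B'`, because a block of a noncrossing partition having one element between two elements
of another block lies entirely between them. Since `INC(χ)` is finite and contains the one-block
partition, the join of `π` and `σ` is then the common refinement of all their common upper
bounds. -/

variable {α : Type*}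

theorem refines_refl (P : Finset (Finset α)) : Refines P P :=
  fun B hB => ⟨B, hB, subset_rfl⟩

theorem Refines.trans {P Q R : Finset (Finset α)} (hPQ : Refines P Q) (hQR : Refines Q R) :
    Refines P R := by
  intro B hB
  obtain ⟨C, hC, hBC⟩ := hPQ B hB
  obtain ⟨D, hD, hCD⟩ := hQR C hC
  exact ⟨D, hD, hBC.trans hCD⟩

theorem IsPartitionOn.eq_of_mem_of_mem {S : Finset α} {P : Finset (Finset α)}
    (hP : IsPartitionOn S P) {A B : Finset α} (hA : A ∈ P) (hB : B ∈ P) {x : α}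
    (hxA : x ∈ A) (hxB : x ∈ B) : A = B := by
  obtain ⟨C, -, hC⟩ := hP.2 x ((hP.1 A hA).2 hxA)
  rw [hC A ⟨hA, hxA⟩, hC B ⟨hB, hxB⟩]

/-- The one-block partition; it has no blocks when `S = ∅`. -/
def oneBlock (S : Finset α) : Finset (Finset α) :=
  ({S} : Finset (Finset α)).filter (·.Nonempty)

theorem eq_of_mem_oneBlock {S V : Finset α} (hV : V ∈ oneBlock S) : V = S :=
  Finset.mem_singleton.1 (Finset.mem_filter.1 hV).1

theorem isPartitionOn_oneBlock (S : Finset α) : IsPartitionOn S (oneBlock S) := by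
  refine ⟨fun B hB => ?_, fun x hx => ⟨S, ?_, fun B hB => eq_of_mem_oneBlock hB.1⟩⟩
  · obtain rfl := eq_of_mem_oneBlock hB
    exact ⟨(Finset.mem_filter.1 hB).2, subset_rfl⟩
  · exact ⟨Finset.mem_filter.2 ⟨Finset.mem_singleton_self S, x, hx⟩, hx⟩

theorem INCOn_oneBlock [LinearOrder α] (S : Finset α) (χ : α → Bool) :
    INCOn S χ (oneBlock S) := by
  have hsub : ∀ V ∈ oneBlock S, ∀ W ∈ oneBlock S, V = W := fun V hV W hW =>
    (eq_of_mem_oneBlock hV).trans (eq_of_mem_oneBlock hW).symm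
  refine ⟨isPartitionOn_oneBlock S, fun V hV W hW hVW => absurd (hsub V hV W hW) hVW, ?_⟩
  rintro V hV ⟨W, hW, hWV, -⟩
  exact absurd (hsub W hW V hV) hWV

theorem refines_oneBlock {S : Finset α} {P : Finset (Finset α)} (hP : IsPartitionOn S P) :
    Refines P (oneBlock S) := by
  intro B hB
  obtain ⟨hne, hBS⟩ := hP.1 B hB
  exact ⟨S, Finset.mem_filter.2 ⟨Finset.mem_singleton_self S, hne.mono hBS⟩, hBS⟩

section CommonRef

variable [DecidableEq α]

def commonRef (P Q : Finset (Finset α)) : Finset (Finset α) :=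
  ((P ×ˢ Q).image (fun p => p.1 ∩ p.2)).filter (·.Nonempty)

theorem mem_commonRef {P Q : Finset (Finset α)} {V : Finset α} :
    V ∈ commonRef P Q ↔ (∃ A ∈ P, ∃ B ∈ Q, A ∩ B = V) ∧ V.Nonempty := by
  simp [commonRef, and_assoc]

theorem inter_mem_commonRef {P Q : Finset (Finset α)} {A B : Finset α} (hA : A ∈ P) (hB : B ∈ Q)
    (hne : (A ∩ B).Nonempty) : A ∩ B ∈ commonRef P Q :=
  mem_commonRef.2 ⟨⟨A, hA, B, hB, rfl⟩, hne⟩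

theorem commonRef_refines_left (P Q : Finset (Finset α)) : Refines (commonRef P Q) P := by
  intro V hV
  obtain ⟨⟨A, hA, B, -, rfl⟩, -⟩ := mem_commonRef.1 hV
  exact ⟨A, hA, Finset.inter_subset_left⟩

theorem commonRef_refines_right (P Q : Finset (Finset α)) : Refines (commonRef P Q) Q := by
  intro V hV
  obtain ⟨⟨A, -, B, hB, rfl⟩, -⟩ := mem_commonRef.1 hV
  exact ⟨B, hB, Finset.inter_subset_right⟩

theorem refines_commonRef {R P Q : Finset (Finset α)} (hR : ∀ B ∈ R, B.Nonempty)
    (hRP : Refines R P) (hRQ : Refines R Q) : Refines R (commonRef P Q) := by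
  intro B hB
  obtain ⟨C, hC, hBC⟩ := hRP B hB
  obtain ⟨D, hD, hBD⟩ := hRQ B hB
  have hBCD : B ⊆ C ∩ D := Finset.subset_inter hBC hBD
  exact ⟨C ∩ D, inter_mem_commonRef hC hD ((hR B hB).mono hBCD), hBCD⟩

theorem IsPartitionOn.commonRef {S : Finset α} {P Q : Finset (Finset α)}
    (hP : IsPartitionOn S P) (hQ : IsPartitionOn S Q) : IsPartitionOn S (commonRef P Q) := by
  refine ⟨fun V hV => ?_, fun x hx => ?_⟩
  · obtain ⟨⟨A, hA, B, -, rfl⟩, hne⟩ := mem_commonRef.1 hV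
    exact ⟨hne, Finset.inter_subset_left.trans (hP.1 A hA).2⟩
  obtain ⟨A, ⟨hA, hxA⟩, -⟩ := hP.2 x hx
  obtain ⟨B, ⟨hB, hxB⟩, -⟩ := hQ.2 x hx
  have hxAB : x ∈ A ∩ B := Finset.mem_inter.2 ⟨hxA, hxB⟩
  refine ⟨A ∩ B, ⟨inter_mem_commonRef hA hB ⟨x, hxAB⟩, hxAB⟩, ?_⟩
  rintro V ⟨hV, hxV⟩
  obtain ⟨⟨A', hA', B', hB', rfl⟩, -⟩ := mem_commonRef.1 hV
  obtain ⟨hxA', hxB'⟩ := Finset.mem_inter.1 hxV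
  rw [hP.eq_of_mem_of_mem hA' hA hxA' hxA, hQ.eq_of_mem_of_mem hB' hB hxB' hxB]

end CommonRef

section Noncrossing

variable [LinearOrder α]

theorem Noncrossing.commonRef {P Q : Finset (Finset α)} (hP : Noncrossing P)
    (hQ : Noncrossing Q) : Noncrossing (commonRef P Q) := by
  rintro V hV W hW hVW ⟨s₁, r₁, s₂, r₂, hs₁, hs₂, hr₁, hr₂, h₁, h₂, h₃⟩
  obtain ⟨⟨A, hA, B, hB, rfl⟩, -⟩ := mem_commonRef.1 hV
  obtain ⟨⟨A', hA', B', hB', rfl⟩, -⟩ := mem_commonRef.1 hW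
  rw [Finset.mem_inter] at hs₁ hs₂ hr₁ hr₂
  by_cases hAA' : A = A'
  · refine hQ B hB B' hB' (fun hBB' => hVW (by rw [hAA', hBB'])) ?_
    exact ⟨s₁, r₁, s₂, r₂, hs₁.2, hs₂.2, hr₁.2, hr₂.2, h₁, h₂, h₃⟩
  · exact hP A hA A' hA' hAA' ⟨s₁, r₁, s₂, r₂, hs₁.1, hs₂.1, hr₁.1, hr₂.1, h₁, h₂, h₃⟩

/-- A block with one element strictly between two elements `s, t` of another block lies entirely
between them, else it would cross that block. -/
theorem Noncrossing.isInnerBlock_of_subset {S : Finset α} {P : Finset (Finset α)}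
    (hP : IsPartitionOn S P) (hNC : Noncrossing P) {A A' V : Finset α} (hA : A ∈ P)
    (hA' : A' ∈ P) (hAA' : A ≠ A') (hVA : V ⊆ A) (hV : V.Nonempty) {s t : α} (hs : s ∈ A')
    (ht : t ∈ A') (hVst : ∀ v ∈ V, s < v ∧ v < t) : IsInnerBlock P A := by
  obtain ⟨k, hk⟩ := hV
  obtain ⟨hsk, hkt⟩ := hVst k hk
  refine ⟨A', hA', hAA'.symm, s, hs, t, ht, fun v hv => ⟨?_, ?_⟩⟩
  · have hvs : v ≠ s := fun h => hAA' (hP.eq_of_mem_of_mem hA hA' hv (h ▸ hs))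
    refine (lt_or_gt_of_ne hvs).resolve_left fun hvs => ?_
    exact hNC A hA A' hA' hAA' ⟨v, s, k, t, hv, hVA hk, hs, ht, hvs, hsk, hkt⟩
  · have hvt : v ≠ t := fun h => hAA' (hP.eq_of_mem_of_mem hA hA' hv (h ▸ ht))
    refine (lt_or_gt_of_ne hvt).resolve_right fun htv => ?_
    exact hNC A' hA' A hA hAA'.symm ⟨s, k, t, v, hs, ht, hVA hk, hv, hsk, hkt, htv⟩

theorem INCOn.commonRef {S : Finset α} {χ : α → Bool} {P Q : Finset (Finset α)}
    (hP : INCOn S χ P) (hQ : INCOn S χ Q) : INCOn S χ (commonRef P Q) := by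
  refine ⟨hP.1.commonRef hQ.1, hP.2.1.commonRef hQ.2.1, ?_⟩
  rintro V hV ⟨W, hW, hWV, s, hs, t, ht, hVst⟩ k hk
  obtain ⟨⟨A, hA, B, hB, rfl⟩, hne⟩ := mem_commonRef.1 hV
  obtain ⟨⟨A', hA', B', hB', rfl⟩, -⟩ := mem_commonRef.1 hW
  rw [Finset.mem_inter] at hs ht hk
  by_cases hAA' : A = A'
  · have hBB' : B ≠ B' := fun hBB' => hWV (by rw [hAA', hBB'])
    exact hQ.2.2 B hB (hQ.2.1.isInnerBlock_of_subset hQ.1 hB hB' hBB'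
      Finset.inter_subset_right hne hs.2 ht.2 hVst) k hk.2
  · exact hP.2.2 A hA (hP.2.1.isInnerBlock_of_subset hP.1 hA hA' hAA'
      Finset.inter_subset_left hne hs.1 ht.1 hVst) k hk.1

theorem exists_INCOn_glb {S : Finset α} {χ : α → Bool} {T : Finset (Finset (Finset α))}
    (hT : T.Nonempty) (hINC : ∀ τ ∈ T, INCOn S χ τ) :
    ∃ μ, INCOn S χ μ ∧ (∀ τ ∈ T, Refines μ τ) ∧
      ∀ R : Finset (Finset α), (∀ B ∈ R, B.Nonempty) → (∀ τ ∈ T, Refines R τ) → Refines R μ := by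
  induction hT using Finset.Nonempty.cons_induction with
  | singleton τ =>
    refine ⟨τ, hINC τ (Finset.mem_singleton_self τ), fun τ' hτ' => ?_, fun R _ hR =>
      hR τ (Finset.mem_singleton_self τ)⟩
    rw [Finset.mem_singleton.1 hτ']
    exact refines_refl τ
  | cons τ T hτ _ ih =>
    obtain ⟨μ, hμ, hμT, hμglb⟩ := ih fun τ' hτ' => hINC τ' (Finset.mem_cons_of_mem hτ')
    refine ⟨commonRef τ μ, (hINC τ (Finset.mem_cons_self τ T)).commonRef hμ, ?_, ?_⟩
    · intro τ' hτ'
      rcases Finset.mem_cons.1 hτ' with rfl | hτ'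
      · exact commonRef_refines_left _ _
      · exact (commonRef_refines_right _ _).trans (hμT τ' hτ')
    · intro R hR hRT
      exact refines_commonRef hR (hRT τ (Finset.mem_cons_self τ T))
        (hμglb R hR fun τ' hτ' => hRT τ' (Finset.mem_cons_of_mem hτ'))

end Noncrossing

/-- INC(χ), ordered by reversed refinement, is a lattice: any two
elements have a join and a meet within INC(χ). -/
theorem INC_is_lattice {n : ℕ} (χ : Fin n → Bool) :
    ∀ π σ : Finset (Finset (Fin n)), INCOn Finset.univ χ π → INCOn Finset.univ χ σ →
      (∃ j : Finset (Finset (Fin n)), INCOn Finset.univ χ j ∧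
        Refines π j ∧ Refines σ j ∧
        ∀ τ : Finset (Finset (Fin n)), INCOn Finset.univ χ τ →
          Refines π τ → Refines σ τ → Refines j τ) ∧
      (∃ w : Finset (Finset (Fin n)), INCOn Finset.univ χ w ∧
        Refines w π ∧ Refines w σ ∧
        ∀ τ : Finset (Finset (Fin n)), INCOn Finset.univ χ τ →
          Refines τ π → Refines τ σ → Refines τ w) := by
  intro π σ hπ hσ
  have nonempty_blocks {P : Finset (Finset (Fin n))} (hP : INCOn Finset.univ χ P) :
      ∀ B ∈ P, B.Nonempty := fun B hB => (hP.1.1 B hB).1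
  refine ⟨?_, ⟨commonRef π σ, hπ.commonRef hσ, commonRef_refines_left π σ,
    commonRef_refines_right π σ, fun τ hτ hτπ hτσ => refines_commonRef (nonempty_blocks hτ) hτπ hτσ⟩⟩
  let U : Finset (Finset (Finset (Fin n))) :=
    Finset.univ.filter fun τ => INCOn Finset.univ χ τ ∧ Refines π τ ∧ Refines σ τ
  have mem_U {τ} : τ ∈ U ↔ INCOn Finset.univ χ τ ∧ Refines π τ ∧ Refines σ τ := by
    simp only [U, Finset.mem_filter, Finset.mem_univ, true_and]
  have hU : U.Nonempty := ⟨oneBlock Finset.univ, mem_U.2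
    ⟨INCOn_oneBlock _ χ, refines_oneBlock hπ.1, refines_oneBlock hσ.1⟩⟩
  obtain ⟨j, hj, hjU, hjglb⟩ := exists_INCOn_glb hU fun τ hτ => (mem_U.1 hτ).1
  exact ⟨j, hj, hjglb π (nonempty_blocks hπ) fun τ hτ => (mem_U.1 hτ).2.1,
    hjglb σ (nonempty_blocks hσ) fun τ hτ => (mem_U.1 hτ).2.2,
    fun τ hτ hπτ hστ => hjU τ (mem_U.2 ⟨hτ, hπτ, hστ⟩)⟩
end

section
/- Let χ : [n] → {•, ∘} and π = {V1,...,Vt} ∈ INC(χ). Then the order interval [0_n, π] = {σ ∈ INC(χ) : σ ≤ π} is isomorphic as a poset to the product INC(χ|_{V1}) × ... × INC(χ|_{Vt}), via restricting σ to each block of π. -/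
open scoped Classical

/-
Restriction to the blocks of `π` is undone by gluing: a partition `σ ≤ π` is the disjoint union
of its restrictions `σ|_V`, and conversely the union of partitions `σ_V ∈ INC(χ|_V)` lies in
`INC(χ)`. Noncrossingness of the union follows from that of `π` and of each `σ_V`. For the
colouring condition, a block `B ⊆ V` that is nested inside a block of `σ_W` with `W ≠ V` forces
`V` itself to be inner in `π` (otherwise `V` and `W` would cross), so `B` carries no `∘`.
-/

namespace IsPartitionOn

variable {α : Type*} {S : Finset α} {P : Finset (Finset α)}

theorem eq_of_mem_of_mem_s9 (h : IsPartitionOn S P) {V W : Finset α} (hV : V ∈ P) (hW : W ∈ P)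
    {x : α} (hxV : x ∈ V) (hxW : x ∈ W) : V = W := by
  obtain ⟨B, -, hB⟩ := h.2 x ((h.1 V hV).2 hxV)
  rw [hB V ⟨hV, hxV⟩, hB W ⟨hW, hxW⟩]

theorem eq_of_subset_of_subset (h : IsPartitionOn S P) {V W B : Finset α} (hV : V ∈ P)
    (hW : W ∈ P) (hB : B.Nonempty) (hBV : B ⊆ V) (hBW : B ⊆ W) : V = W :=
  let ⟨_, hx⟩ := hB
  h.eq_of_mem_of_mem_s9 hV hW (hBV hx) (hBW hx)

variable [DecidableEq α]

theorem filter_subset_of_refines {σ : Finset (Finset α)} (hσ : IsPartitionOn S σ)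
    (hP : IsPartitionOn S P) (hr : Refines σ P) {V : Finset α} (hV : V ∈ P) :
    IsPartitionOn V (σ.filter (· ⊆ V)) := by
  refine ⟨fun B hB => ⟨(hσ.1 B (Finset.mem_filter.1 hB).1).1, (Finset.mem_filter.1 hB).2⟩,
    fun x hx => ?_⟩
  obtain ⟨B, ⟨hBσ, hxB⟩, huniq⟩ := hσ.2 x ((hP.1 V hV).2 hx)
  obtain ⟨V', hV', hBV'⟩ := hr B hBσ
  obtain rfl : V' = V := hP.eq_of_mem_of_mem_s9 hV' hV (hBV' hxB) hx
  exact ⟨B, ⟨Finset.mem_filter.2 ⟨hBσ, hBV'⟩, hxB⟩,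
    fun C ⟨hC, hxC⟩ => huniq C ⟨(Finset.mem_filter.1 hC).1, hxC⟩⟩

theorem biUnion {f : Finset α → Finset (Finset α)} (hP : IsPartitionOn S P)
    (hf : ∀ V ∈ P, IsPartitionOn V (f V)) : IsPartitionOn S (P.biUnion f) := by
  refine ⟨fun B hB => ?_, fun x hx => ?_⟩
  · obtain ⟨V, hV, hBV⟩ := Finset.mem_biUnion.1 hB
    exact ⟨((hf V hV).1 B hBV).1, ((hf V hV).1 B hBV).2.trans (hP.1 V hV).2⟩
  · obtain ⟨V, ⟨hV, hxV⟩, hVuniq⟩ := hP.2 x hx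
    obtain ⟨B, ⟨hBV, hxB⟩, hBuniq⟩ := (hf V hV).2 x hxV
    refine ⟨B, ⟨Finset.mem_biUnion.2 ⟨V, hV, hBV⟩, hxB⟩, fun C ⟨hC, hxC⟩ => ?_⟩
    obtain ⟨V', hV', hCV'⟩ := Finset.mem_biUnion.1 hC
    obtain rfl : V' = V := hVuniq V' ⟨hV', ((hf V' hV').1 C hCV').2 hxC⟩
    exact hBuniq C ⟨hCV', hxC⟩

end IsPartitionOn

section Refines

variable {α : Type*} [DecidableEq α] {S : Finset α} {σ σ' π : Finset (Finset α)}

theorem Refines.eq_biUnion_filter (h : Refines σ π) :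
    σ = π.biUnion fun V => σ.filter (· ⊆ V) := by
  ext B
  simp only [Finset.mem_biUnion, Finset.mem_filter]
  exact ⟨fun hB => let ⟨V, hV, hBV⟩ := h B hB; ⟨V, hV, hB, hBV⟩, fun ⟨_, _, hB, _⟩ => hB⟩

theorem restrictPart_eq_filter (hσ : ∀ B ∈ σ, B.Nonempty) (hπ : IsPartitionOn S π)
    (h : Refines σ π) {V : Finset α} (hV : V ∈ π) :
    restrictPart σ V = σ.filter (· ⊆ V) := by
  ext B
  simp only [restrictPart, Finset.mem_filter, Finset.mem_image]
  constructor
  · rintro ⟨⟨C, hC, rfl⟩, x, hx⟩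
    obtain ⟨V', hV', hCV'⟩ := h C hC
    obtain rfl : V' = V :=
      hπ.eq_of_mem_of_mem_s9 hV' hV (hCV' (Finset.mem_inter.1 hx).1) (Finset.mem_inter.1 hx).2
    rw [Finset.inter_eq_left.2 hCV']
    exact ⟨hC, hCV'⟩
  · rintro ⟨hB, hBV⟩
    exact ⟨⟨B, hB, Finset.inter_eq_left.2 hBV⟩, hσ B hB⟩

theorem refines_iff_forall_filter (hσ : ∀ B ∈ σ, B.Nonempty) (hπ : IsPartitionOn S π)
    (h : Refines σ π) (h' : Refines σ' π) :
    Refines σ σ' ↔ ∀ V ∈ π, Refines (σ.filter (· ⊆ V)) (σ'.filter (· ⊆ V)) := by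
  constructor
  · intro hσσ' V hV B hB
    obtain ⟨hBσ, hBV⟩ := Finset.mem_filter.1 hB
    obtain ⟨C, hC, hBC⟩ := hσσ' B hBσ
    obtain ⟨V', hV', hCV'⟩ := h' C hC
    obtain rfl : V = V' := hπ.eq_of_subset_of_subset hV hV' (hσ B hBσ) hBV (hBC.trans hCV')
    exact ⟨C, Finset.mem_filter.2 ⟨hC, hCV'⟩, hBC⟩
  · intro hV B hB
    obtain ⟨V, hV', hBV⟩ := h B hB
    obtain ⟨C, hC, hBC⟩ := hV V hV' B (Finset.mem_filter.2 ⟨hB, hBV⟩)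
    exact ⟨C, (Finset.mem_filter.1 hC).1, hBC⟩

variable {f : Finset α → Finset (Finset α)}

theorem refines_biUnion (hf : ∀ V ∈ π, ∀ B ∈ f V, B ⊆ V) : Refines (π.biUnion f) π := by
  intro B hB
  obtain ⟨V, hV, hBV⟩ := Finset.mem_biUnion.1 hB
  exact ⟨V, hV, hf V hV B hBV⟩

theorem filter_subset_biUnion (hπ : IsPartitionOn S π)
    (hf : ∀ V ∈ π, ∀ B ∈ f V, B.Nonempty ∧ B ⊆ V) {V : Finset α} (hV : V ∈ π) :
    (π.biUnion f).filter (· ⊆ V) = f V := by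
  ext B
  rw [Finset.mem_filter, Finset.mem_biUnion]
  constructor
  · rintro ⟨⟨V', hV', hBV'⟩, hBV⟩
    obtain rfl : V' = V :=
      hπ.eq_of_subset_of_subset hV' hV (hf V' hV' B hBV').1 (hf V' hV' B hBV').2 hBV
    exact hBV'
  · exact fun hB => ⟨⟨V, hV, hB⟩, (hf V hV B hB).2⟩

end Refines

section Order

variable {α : Type*} [LinearOrder α] {S T : Finset α} {χ : α → Bool} {P Q : Finset (Finset α)}

theorem Noncrossing.mono (h : Noncrossing P) (hQP : Q ⊆ P) : Noncrossing Q :=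
  fun V hV W hW => h V (hQP hV) W (hQP hW)

theorem IsInnerBlock.mono {V : Finset α} (h : IsInnerBlock Q V) (hQP : Q ⊆ P) :
    IsInnerBlock P V :=
  let ⟨W, hW, hWV, hs⟩ := h
  ⟨W, hQP hW, hWV, hs⟩

theorem INCOn.of_subset (h : INCOn S χ P) (hQP : Q ⊆ P) (hQ : IsPartitionOn T Q) :
    INCOn T χ Q :=
  ⟨hQ, h.2.1.mono hQP, fun V hV hin => h.2.2 V (hQP hV) (hin.mono hQP)⟩

theorem Noncrossing.biUnion [DecidableEq α] {f : Finset α → Finset (Finset α)}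
    (hP : Noncrossing P) (hsub : ∀ V ∈ P, ∀ B ∈ f V, B ⊆ V) (hf : ∀ V ∈ P, Noncrossing (f V)) :
    Noncrossing (P.biUnion f) := by
  intro B hB B' hB' hne
  obtain ⟨V, hV, hBV⟩ := Finset.mem_biUnion.1 hB
  obtain ⟨V', hV', hBV'⟩ := Finset.mem_biUnion.1 hB'
  by_cases hVV' : V = V'
  · subst hVV'
    exact hf V hV B hBV B' hBV' hne
  · rintro ⟨s₁, r₁, s₂, r₂, hs₁, hs₂, hr₁, hr₂, hlt⟩
    have hB := hsub V hV B hBV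
    have hB' := hsub V' hV' B' hBV'
    exact hP V hV V' hV' hVV' ⟨s₁, r₁, s₂, r₂, hB hs₁, hB hs₂, hB' hr₁, hB' hr₂, hlt⟩

theorem Noncrossing.isInnerBlock_of_lt_of_lt_s9 (hnc : Noncrossing P) (hP : IsPartitionOn S P)
    {V W : Finset α} (hV : V ∈ P) (hW : W ∈ P) (hVW : V ≠ W) {s b t : α} (hs : s ∈ W)
    (hb : b ∈ V) (ht : t ∈ W) (hsb : s < b) (hbt : b < t) : IsInnerBlock P V := by
  have hne : ∀ v ∈ V, ∀ w ∈ W, v ≠ w := fun v hv w hw hvw =>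
    hVW (hP.eq_of_mem_of_mem_s9 hV hW hv (hvw ▸ hw))
  refine ⟨W, hW, hVW.symm, s, hs, t, ht, fun v hv => ⟨?_, ?_⟩⟩
  · refine lt_of_not_ge fun hvs => hnc V hV W hW hVW ?_
    exact ⟨v, s, b, t, hv, hb, hs, ht, lt_of_le_of_ne hvs (hne v hv s hs), hsb, hbt⟩
  · refine lt_of_not_ge fun htv => hnc W hW V hV hVW.symm ?_
    exact ⟨s, b, t, v, hs, ht, hb, hv, hsb, hbt, lt_of_le_of_ne htv (hne v hv t ht).symm⟩

theorem INCOn.biUnion [DecidableEq α] {f : Finset α → Finset (Finset α)} (hP : INCOn S χ P)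
    (hf : ∀ V ∈ P, INCOn V χ (f V)) : INCOn S χ (P.biUnion f) := by
  have hsub : ∀ V ∈ P, ∀ B ∈ f V, B ⊆ V := fun V hV B hB => ((hf V hV).1.1 B hB).2
  refine ⟨hP.1.biUnion fun V hV => (hf V hV).1,
    hP.2.1.biUnion hsub fun V hV => (hf V hV).2.1, ?_⟩
  rintro B hB ⟨W, hW, hWB, s, hs, t, ht, hbetween⟩ k hk
  obtain ⟨V, hV, hBV⟩ := Finset.mem_biUnion.1 hB
  obtain ⟨V', hV', hWV'⟩ := Finset.mem_biUnion.1 hW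
  by_cases hVV' : V' = V
  · subst hVV'
    exact (hf V' hV).2.2 B hBV ⟨W, hWV', hWB, s, hs, t, ht, hbetween⟩ k hk
  · obtain ⟨b, hb⟩ := ((hf V hV).1.1 B hBV).1
    have hVinner : IsInnerBlock P V :=
      hP.2.1.isInnerBlock_of_lt_of_lt_s9 hP.1 hV hV' (Ne.symm hVV') (hsub V' hV' W hWV' hs)
        (hsub V hV B hBV hb) (hsub V' hV' W hWV' ht) (hbetween b hb).1 (hbetween b hb).2
    exact hP.2.2 V hV hVinner k (hsub V hV B hBV hk)

end Order

/-- for π ∈ INC(χ), the order interval [0ₙ, π] in INC(χ) is poset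
isomorphic to the product of the INC(χ|_V) over the blocks V of π, via σ ↦ (σ|_V)_V. -/
theorem INC_interval_iso_prod {n : ℕ} (χ : Fin n → Bool)
    (π : Finset (Finset (Fin n))) (hπ : INCOn Finset.univ χ π) :
    -- well defined
    (∀ σ : Finset (Finset (Fin n)), INCOn Finset.univ χ σ → Refines σ π →
      ∀ V ∈ π, INCOn V χ (restrictPart σ V)) ∧
    -- injectivity
    (∀ σ₁ σ₂ : Finset (Finset (Fin n)),
      INCOn Finset.univ χ σ₁ → Refines σ₁ π →
      INCOn Finset.univ χ σ₂ → Refines σ₂ π →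
      (∀ V ∈ π, restrictPart σ₁ V = restrictPart σ₂ V) → σ₁ = σ₂) ∧
    -- surjectivity
    (∀ f : Finset (Fin n) → Finset (Finset (Fin n)),
      (∀ V ∈ π, INCOn V χ (f V)) →
      ∃ σ : Finset (Finset (Fin n)), INCOn Finset.univ χ σ ∧ Refines σ π ∧
        ∀ V ∈ π, restrictPart σ V = f V) ∧
    -- order isomorphism (both directions)
    (∀ σ₁ σ₂ : Finset (Finset (Fin n)),
      INCOn Finset.univ χ σ₁ → Refines σ₁ π →
      INCOn Finset.univ χ σ₂ → Refines σ₂ π →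
      (Refines σ₁ σ₂ ↔ ∀ V ∈ π, Refines (restrictPart σ₁ V) (restrictPart σ₂ V))) := by
  have hrestrict : ∀ σ, INCOn Finset.univ χ σ → Refines σ π →
      ∀ V ∈ π, restrictPart σ V = σ.filter (· ⊆ V) := fun σ hσ hr V hV =>
    restrictPart_eq_filter (fun B hB => (hσ.1.1 B hB).1) hπ.1 hr hV
  refine ⟨fun σ hσ hr V hV => ?_, fun σ₁ σ₂ h₁ hr₁ h₂ hr₂ heq => ?_, fun f hf => ?_,
    fun σ₁ σ₂ h₁ hr₁ h₂ hr₂ => ?_⟩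
  · rw [hrestrict σ hσ hr V hV]
    exact hσ.of_subset (Finset.filter_subset _ _) (hσ.1.filter_subset_of_refines hπ.1 hr hV)
  · rw [hr₁.eq_biUnion_filter, hr₂.eq_biUnion_filter]
    refine Finset.biUnion_congr rfl fun V hV => ?_
    rw [← hrestrict σ₁ h₁ hr₁ V hV, ← hrestrict σ₂ h₂ hr₂ V hV, heq V hV]
  · have hsub : ∀ V ∈ π, ∀ B ∈ f V, B.Nonempty ∧ B ⊆ V := fun V hV => (hf V hV).1.1
    have hσ : INCOn Finset.univ χ (π.biUnion f) := hπ.biUnion hf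
    have hr : Refines (π.biUnion f) π := refines_biUnion fun V hV B hB => (hsub V hV B hB).2
    refine ⟨π.biUnion f, hσ, hr, fun V hV => ?_⟩
    rw [hrestrict _ hσ hr V hV, filter_subset_biUnion hπ.1 hsub hV]
  · rw [refines_iff_forall_filter (fun B hB => (h₁.1.1 B hB).1) hπ.1 hr₁ hr₂]
    refine forall₂_congr fun V hV => ?_
    rw [hrestrict σ₁ h₁ hr₁ V hV, hrestrict σ₂ h₂ hr₂ V hV]
end
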